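/- Fix a complex matrix model with finite exponent set I (potential Σ_{p∈I} λ_p Tr((φφ̄)^p)). If R and Q are connected Feynman graphs of this model (closed 3-colored graphs with colors {0,1,2}, on disjoint vertex sets), e is a color-0 edge of R and f is a color-0 edge of Q, then the connected sum R #_{e,f} Q is again a connected Feynman graph of the same model. -/

import Mathlib

/-!  Closed colored graphs (colored tensor model / matrix model Feynman graphs). -/

/-- A closed `D`-colored graph: a finite set `W` of white vertices, a finite set `B`
of black vertices, and for each color `c : Fin D` a bijection `σ c : W ≃ B`;
the color-`c` edges are the pairs `(w, σ c w)`. -/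
structure CGraph (D : ℕ) where
  W : Type
  B : Type
  finW : Finite W
  finB : Finite B
  σ : Fin D → W ≃ B

namespace CGraph

variable {D : ℕ}

/-- The permutation `σ_d⁻¹ ∘ σ_c` of the white vertices. Its orbits are the
(cd)-bicolored faces. -/
def biperm (G : CGraph D) (c d : Fin D) : Equiv.Perm G.W :=
  (G.σ c).trans (G.σ d).symm

/-- The "same cycle" setoid of a permutation. -/
def cycleSetoid {α : Type*} (π : Equiv.Perm α) : Setoid α where
  r := π.SameCycle
  iseqv := ⟨fun _ => ⟨0, by simp⟩, fun h => h.symm, fun h h' => h.trans h'⟩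

/-- The number of cycles (orbits) of a permutation. -/
noncomputable def numCycles {α : Type*} (π : Equiv.Perm α) : ℕ :=
  Nat.card (Quotient (cycleSetoid π))

/-- Total number of bicolored faces of a closed 3-colored graph
(over the three pairs of colors). -/
noncomputable def faces (G : CGraph 3) : ℕ :=
  numCycles (G.biperm 0 1) + numCycles (G.biperm 0 2) + numCycles (G.biperm 1 2)

/-- Euler characteristic of a closed 3-colored graph:
`χ(G) = #vertices − #edges + #faces = 2|W| − 3|W| + F(G)`. -/
noncomputable def euler (G : CGraph 3) : ℤ :=
  2 * (Nat.card G.W : ℤ) - 3 * (Nat.card G.W : ℤ) + (faces G : ℤ)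

/-- Connectedness: the subgroup generated by all the permutations `σ_d⁻¹ ∘ σ_c`
acts transitively on the white vertices. -/
def Connected (G : CGraph D) : Prop :=
  ∀ v w : G.W,
    ∃ π ∈ Subgroup.closure {π : Equiv.Perm G.W | ∃ c d : Fin D, π = G.biperm c d}, π v = w

/-- The number of white vertices in the (cd)-bicolored face through `v`
(the face itself has twice as many vertices). -/
noncomputable def faceSize (G : CGraph 3) (c d : Fin 3) (v : G.W) : ℕ :=
  Nat.card {w : G.W // (G.biperm c d).SameCycle v w}

/-- A closed 3-colored graph with colors `{0,1,2}` is a Feynman graph of the quartic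
complex matrix model iff every (12)-bicolored face has exactly 4 vertices, i.e. every
orbit of `σ₂⁻¹ ∘ σ₁` has exactly 2 elements. -/
def QuarticFeynman (G : CGraph 3) : Prop :=
  ∀ v : G.W, G.faceSize 1 2 v = 2

end CGraph

namespace CGraph

/-- Connected sum of two closed `D`-colored graphs along the color-`c` edges
`e = (v, σ_c v)` of `R` and `f = (v', τ_c v')` of `Q`: delete the two edges and add the
color-`c` edges `(v, τ_c v')` and `(v', σ_c v)`; all other edges are kept. -/
noncomputable def connSum {D : ℕ} (R Q : CGraph D) (c : Fin D) (v : R.W) (v' : Q.W) : CGraph D where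
  W := R.W ⊕ Q.W
  B := R.B ⊕ Q.B
  finW := by haveI := R.finW; haveI := Q.finW; exact inferInstance
  finB := by haveI := R.finB; haveI := Q.finB; exact inferInstance
  σ := fun d =>
    letI : DecidableEq (R.B ⊕ Q.B) := Classical.decEq _
    if d = c then
      ((R.σ d).sumCongr (Q.σ d)).trans
        (Equiv.swap (Sum.inl (R.σ c v)) (Sum.inr (Q.σ c v')))
    else (R.σ d).sumCongr (Q.σ d)

end CGraph

/-- A closed 3-colored graph with colors `{0,1,2}` is a Feynman graph of the complex
matrix model with potential `Σ_{p ∈ I} λ_p Tr((φφ̄)^p)` iff every (12)-bicolored face has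
exactly `2p` vertices for some `p ∈ I`, i.e. every orbit of `σ₂⁻¹ ∘ σ₁` has exactly `p`
elements for some `p ∈ I`. -/
def CGraph.IsModelFeynman (I : Finset ℕ) (G : CGraph 3) : Prop :=
  ∀ v : G.W, G.faceSize 1 2 v ∈ I

/-! The colors `1, 2` are untouched by the surgery, so the `(12)`-faces of `R #₀ Q` are exactly
those of `R` and of `Q`. For a color `d ≠ 0`, the `(0d)`-face permutation of the sum is that of
the disjoint union `R ⊔ Q` followed by the transposition of the images of `v` and `v'`; this
merges the `(0d)`-faces through `v` and `v'` into one, so `v` and `v'` become linked. Every other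
`(0d)`-step of `R` or `Q` survives in the sum, and these steps generate all face permutations,
as `σ_b⁻¹σ_a = (σ_b⁻¹σ_0)(σ_a⁻¹σ_0)⁻¹`. -/

namespace Equiv.Perm

variable {α β : Type*}

theorem sumCongr_zpow (f : Perm α) (g : Perm β) (k : ℤ) :
    sumCongr f g ^ k = sumCongr (f ^ k) (g ^ k) :=
  (map_zpow (sumCongrHom α β) (f, g) k).symm

variable {f : Perm α} {g : Perm β}

@[simp]
theorem sameCycle_sumCongr_inl_inl {x y : α} :
    (sumCongr f g).SameCycle (.inl x) (.inl y) ↔ f.SameCycle x y := by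
  simp [SameCycle, sumCongr_zpow]

@[simp]
theorem sameCycle_sumCongr_inr_inr {x y : β} :
    (sumCongr f g).SameCycle (.inr x) (.inr y) ↔ g.SameCycle x y := by
  simp [SameCycle, sumCongr_zpow]

@[simp]
theorem not_sameCycle_sumCongr_inl_inr {x : α} {y : β} :
    ¬(sumCongr f g).SameCycle (.inl x) (.inr y) := by
  simp [SameCycle, sumCongr_zpow]

@[simp]
theorem not_sameCycle_sumCongr_inr_inl {x : β} {y : α} :
    ¬(sumCongr f g).SameCycle (.inr x) (.inl y) := by
  simp [SameCycle, sumCongr_zpow]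

theorem card_sameCycle_sumCongr_inl (x : α) :
    Nat.card {w // (sumCongr f g).SameCycle (.inl x) w} = Nat.card {y // f.SameCycle x y} :=
  have : IsEmpty {y // (sumCongr f g).SameCycle (.inl x) (.inr y)} := ⟨fun y => by simpa using y.2⟩
  Nat.card_congr <| subtypeSum.trans <| (sumEmpty _ _).trans <|
    subtypeEquivRight fun _ => sameCycle_sumCongr_inl_inl

theorem card_sameCycle_sumCongr_inr (x : β) :
    Nat.card {w // (sumCongr f g).SameCycle (.inr x) w} = Nat.card {y // g.SameCycle x y} :=
  have : IsEmpty {y // (sumCongr f g).SameCycle (.inr x) (.inl y)} := ⟨fun y => by simpa using y.2⟩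
  Nat.card_congr <| subtypeSum.trans <| (emptySum _ _).trans <|
    subtypeEquivRight fun _ => sameCycle_sumCongr_inr_inr

theorem sameCycle_map_apply_of_forall_ne [Finite β] {e : β → α} {x : β}
    (h : ∀ y ≠ x, f (e y) = e (g y)) : f.SameCycle (e (g x)) (e x) := by
  suffices ∀ n : ℕ, ∀ y, (g ^ n) y = x → f.SameCycle (e y) (e x) by
    obtain ⟨n, hn⟩ := (sameCycle_apply_left.2 (SameCycle.refl g x)).exists_nat_pow_eq
    exact this n _ hn
  intro n
  induction n with
  | zero => rintro y (rfl : y = x); rfl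
  | succ n ih =>
    intro y hy
    by_cases hyx : y = x
    · rw [hyx]
    · rw [pow_succ, mul_apply] at hy
      have := ih _ hy
      rw [← h y hyx] at this
      exact sameCycle_apply_left.1 this

section Merge

variable [DecidableEq α] [DecidableEq β] {x₀ : α} {y₀ : β}

theorem swap_mul_sumCongr_apply_inl {x : α} (hx : x ≠ x₀) :
    (swap (Sum.inl (f x₀)) (Sum.inr (g y₀)) * sumCongr f g) (.inl x) = .inl (f x) := by
  simp [swap_apply_of_ne_of_ne, f.injective.ne hx]

theorem swap_mul_sumCongr_apply_inr {y : β} (hy : y ≠ y₀) :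
    (swap (Sum.inl (f x₀)) (Sum.inr (g y₀)) * sumCongr f g) (.inr y) = .inr (g y) := by
  simp [swap_apply_of_ne_of_ne, g.injective.ne hy]

theorem swap_mul_sumCongr_apply_inl_self :
    (swap (Sum.inl (f x₀)) (Sum.inr (g y₀)) * sumCongr f g) (.inl x₀) = .inr (g y₀) := by
  simp

theorem swap_mul_sumCongr_apply_inr_self :
    (swap (Sum.inl (f x₀)) (Sum.inr (g y₀)) * sumCongr f g) (.inr y₀) = .inl (f x₀) := by
  simp

theorem sameCycle_swap_mul_sumCongr [Finite β] :
    (swap (Sum.inl (f x₀)) (Sum.inr (g y₀)) * sumCongr f g).SameCycle (.inl x₀) (.inr y₀) := by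
  have h := sameCycle_map_apply_of_forall_ne
    (f := swap (Sum.inl (f x₀)) (Sum.inr (g y₀)) * sumCongr f g) (e := Sum.inr) (x := y₀)
    fun y hy => swap_mul_sumCongr_apply_inr hy
  rw [← sameCycle_apply_left, swap_mul_sumCongr_apply_inl_self]
  exact h

end Merge

end Equiv.Perm

theorem Equiv.sumCongr_trans_swap_trans_symm {α₁ α₂ β₁ β₂ : Type*} [DecidableEq (α₁ ⊕ α₂)]
    [DecidableEq (β₁ ⊕ β₂)] (e₁ f₁ : α₁ ≃ β₁) (e₂ f₂ : α₂ ≃ β₂) (a : α₁) (b : α₂) :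
    ((e₁.sumCongr e₂).trans (swap (.inl (e₁ a)) (.inr (e₂ b)))).trans (f₁.sumCongr f₂).symm =
      swap (.inl (f₁.symm (e₁ a))) (.inr (f₂.symm (e₂ b))) *
        Perm.sumCongr (e₁.trans f₁.symm) (e₂.trans f₂.symm) := by
  ext (x | y) <;> simp [swap_apply_def] <;> split_ifs <;> simp_all

theorem MulAction.orbitRel_closure_le {G α : Type*} [Group G] [MulAction G α] {S : Set G}
    {r : Setoid α} (h : ∀ g ∈ S, ∀ x, r (g • x) x) : orbitRel (Subgroup.closure S) α ≤ r := by
  suffices ∀ g ∈ Subgroup.closure S, ∀ x, r (g • x) x by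
    rintro _ x ⟨⟨g, hg⟩, rfl⟩
    exact this g hg x
  intro g hg
  induction hg using Subgroup.closure_induction with
  | mem g hg => exact h g hg
  | one => exact fun x => by simpa only [one_smul] using r.refl' x
  | mul g k _ _ ihg ihk => exact fun x => by simpa [mul_smul] using r.trans' (ihg (k • x)) (ihk x)
  | inv g _ ih => exact fun x => by simpa using r.symm' (ih (g⁻¹ • x))

namespace CGraph

variable {D : ℕ}

def faceGroup (G : CGraph D) : Subgroup (Equiv.Perm G.W) :=
  Subgroup.closure {π | ∃ c d : Fin D, π = G.biperm c d}

def sameComponent (G : CGraph D) : Setoid G.W :=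
  MulAction.orbitRel G.faceGroup G.W

theorem connected_iff (G : CGraph D) : G.Connected ↔ ∀ x y, G.sameComponent x y := by
  refine forall_comm.trans (forall₂_congr fun x y => ?_)
  rw [sameComponent, MulAction.orbitRel_apply, MulAction.mem_orbit_iff]
  exact ⟨fun ⟨π, hπ, h⟩ => ⟨⟨π, hπ⟩, h⟩, fun ⟨⟨π, hπ⟩, h⟩ => ⟨π, hπ, h⟩⟩

theorem sameComponent_apply_of_mem {G : CGraph D} {π : Equiv.Perm G.W} (hπ : π ∈ G.faceGroup)
    (x : G.W) : G.sameComponent (π x) x :=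
  MulAction.orbitRel_apply.2 <| MulAction.mem_orbit_iff.2 ⟨⟨π, hπ⟩, rfl⟩

theorem biperm_mem_faceGroup (G : CGraph D) (c d : Fin D) : G.biperm c d ∈ G.faceGroup :=
  Subgroup.subset_closure ⟨c, d, rfl⟩

theorem sameComponent_of_biperm_apply_eq {G : CGraph D} {c d : Fin D} {x y : G.W}
    (h : G.biperm c d x = y) : G.sameComponent y x :=
  h ▸ sameComponent_apply_of_mem (G.biperm_mem_faceGroup c d) x

theorem sameComponent_of_sameCycle {G : CGraph D} {c d : Fin D} {x y : G.W}
    (h : (G.biperm c d).SameCycle x y) : G.sameComponent x y := by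
  obtain ⟨k, rfl⟩ := h
  exact G.sameComponent.symm' <|
    sameComponent_apply_of_mem (zpow_mem (G.biperm_mem_faceGroup c d) k) x

@[simp]
theorem biperm_self (G : CGraph D) (c : Fin D) : G.biperm c c = 1 := by
  ext x; simp [biperm]

theorem biperm_mul_biperm (G : CGraph D) (c d e : Fin D) :
    G.biperm d e * G.biperm c d = G.biperm c e := by
  ext x; simp [biperm]

theorem sameComponent_le_of_biperm (G : CGraph D) (e : Fin D) {r : Setoid G.W}
    (h : ∀ d x, r (G.biperm e d x) x) : G.sameComponent ≤ r := by
  refine MulAction.orbitRel_closure_le ?_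
  rintro _ ⟨c, d, rfl⟩ x
  set y := G.biperm c e x
  have hx : G.biperm e c y = x := by
    rw [← Equiv.Perm.mul_apply, biperm_mul_biperm, biperm_self, Equiv.Perm.one_apply]
  have hd : G.biperm c d x = G.biperm e d y := by
    rw [← Equiv.Perm.mul_apply, biperm_mul_biperm]
  rw [Equiv.Perm.smul_def, hd]
  exact r.trans' (h d y) (r.symm' (hx ▸ h c y))

section ConnSum

variable {R Q : CGraph D} {c d : Fin D} {v : R.W} {v' : Q.W}

open Classical in
theorem connSum_σ_self :
    (connSum R Q c v v').σ c =
      ((R.σ c).sumCongr (Q.σ c)).trans (Equiv.swap (.inl (R.σ c v)) (.inr (Q.σ c v'))) := by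
  simp only [connSum, if_pos]
  -- `connSum` builds the transposition with `Classical.decEq`
  congr
  exact Subsingleton.elim _ _

theorem connSum_σ_of_ne (hd : d ≠ c) : (connSum R Q c v v').σ d = (R.σ d).sumCongr (Q.σ d) := by
  simp [connSum, hd]

theorem connSum_biperm_of_ne {a b : Fin D} (ha : a ≠ c) (hb : b ≠ c) :
    (connSum R Q c v v').biperm a b = (R.biperm a b).sumCongr (Q.biperm a b) := by
  rw [biperm, connSum_σ_of_ne ha, connSum_σ_of_ne hb]
  ext (x | y) <;> rfl

open Classical in
theorem connSum_biperm_self (hd : d ≠ c) :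
    (connSum R Q c v v').biperm c d =
      Equiv.swap (.inl (R.biperm c d v)) (.inr (Q.biperm c d v')) *
        (R.biperm c d).sumCongr (Q.biperm c d) := by
  rw [biperm, connSum_σ_self, connSum_σ_of_ne hd]
  exact Equiv.sumCongr_trans_swap_trans_symm ..

theorem connSum_sameComponent_inl_inr (hd : d ≠ c) :
    (connSum R Q c v v').sameComponent (.inl v) (.inr v') := by
  classical
  have := Q.finW
  refine sameComponent_of_sameCycle (c := c) (d := d) ?_
  rw [connSum_biperm_self hd]
  exact Equiv.Perm.sameCycle_swap_mul_sumCongr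

theorem connSum_sameComponent_inl (hR : R.Connected) (x : R.W) :
    (connSum R Q c v v').sameComponent (.inl x) (.inl v) := by
  classical
  let r := (connSum R Q c v v').sameComponent
  suffices R.sameComponent ≤ r.comap Sum.inl from this ((connected_iff R).1 hR x v)
  refine R.sameComponent_le_of_biperm c fun d x => ?_
  show r (.inl (R.biperm c d x)) (.inl x)
  obtain rfl | hd := eq_or_ne d c
  · rw [biperm_self, Equiv.Perm.one_apply]
    exact r.refl' _
  obtain rfl | hx := eq_or_ne x v
  · refine r.trans' (sameComponent_of_biperm_apply_eq (c := c) (d := d) ?_)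
      (r.symm' (connSum_sameComponent_inl_inr hd))
    rw [connSum_biperm_self hd]
    exact Equiv.Perm.swap_mul_sumCongr_apply_inr_self
  · refine sameComponent_of_biperm_apply_eq (c := c) (d := d) ?_
    rw [connSum_biperm_self hd]
    exact Equiv.Perm.swap_mul_sumCongr_apply_inl hx

theorem connSum_sameComponent_inr (hQ : Q.Connected) (y : Q.W) :
    (connSum R Q c v v').sameComponent (.inr y) (.inr v') := by
  classical
  let r := (connSum R Q c v v').sameComponent
  suffices Q.sameComponent ≤ r.comap Sum.inr from this ((connected_iff Q).1 hQ y v')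
  refine Q.sameComponent_le_of_biperm c fun d y => ?_
  show r (.inr (Q.biperm c d y)) (.inr y)
  obtain rfl | hd := eq_or_ne d c
  · rw [biperm_self, Equiv.Perm.one_apply]
    exact r.refl' _
  obtain rfl | hy := eq_or_ne y v'
  · refine r.trans' (sameComponent_of_biperm_apply_eq (c := c) (d := d) ?_)
      (connSum_sameComponent_inl_inr hd)
    rw [connSum_biperm_self hd]
    exact Equiv.Perm.swap_mul_sumCongr_apply_inl_self
  · refine sameComponent_of_biperm_apply_eq (c := c) (d := d) ?_
    rw [connSum_biperm_self hd]
    exact Equiv.Perm.swap_mul_sumCongr_apply_inr hy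

theorem connSum_connected (hR : R.Connected) (hQ : Q.Connected) (hd : d ≠ c) :
    (connSum R Q c v v').Connected := by
  let r := (connSum R Q c v v').sameComponent
  have hv : ∀ a, r a (.inl v)
    | .inl x => connSum_sameComponent_inl hR x
    | .inr y => r.trans' (connSum_sameComponent_inr hQ y)
        (r.symm' (connSum_sameComponent_inl_inr hd))
  exact (connected_iff _).2 fun a b => r.trans' (hv a) (r.symm' (hv b))

end ConnSum

theorem faceSize_connSum_inl {R Q : CGraph 3} {c a b : Fin 3} (v : R.W) (v' : Q.W)
    (ha : a ≠ c) (hb : b ≠ c) (x : R.W) :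
    (connSum R Q c v v').faceSize a b (.inl x) = R.faceSize a b x :=
  -- not `rw`: `(connSum R Q c v v').W` is `R.W ⊕ Q.W` only after unfolding `connSum`
  (congrArg (fun π : Equiv.Perm (connSum R Q c v v').W => Nat.card {w // π.SameCycle (.inl x) w})
    (connSum_biperm_of_ne ha hb)).trans (Equiv.Perm.card_sameCycle_sumCongr_inl x)

theorem faceSize_connSum_inr {R Q : CGraph 3} {c a b : Fin 3} (v : R.W) (v' : Q.W)
    (ha : a ≠ c) (hb : b ≠ c) (y : Q.W) :
    (connSum R Q c v v').faceSize a b (.inr y) = Q.faceSize a b y :=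
  (congrArg (fun π : Equiv.Perm (connSum R Q c v v').W => Nat.card {w // π.SameCycle (.inr y) w})
    (connSum_biperm_of_ne ha hb)).trans (Equiv.Perm.card_sameCycle_sumCongr_inr y)

theorem isModelFeynman_connSum {I : Finset ℕ} {R Q : CGraph 3} (hR : IsModelFeynman I R)
    (hQ : IsModelFeynman I Q) (v : R.W) (v' : Q.W) : IsModelFeynman I (connSum R Q 0 v v')
  | .inl x => faceSize_connSum_inl (c := 0) (a := 1) (b := 2) v v' (by decide) (by decide) x ▸
      hR x
  | .inr y => faceSize_connSum_inr (c := 0) (a := 1) (b := 2) v v' (by decide) (by decide) y ▸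
      hQ y

end CGraph

theorem connSum_isModelFeynman_general (I : Finset ℕ)
    (R Q : CGraph 3) (hRc : R.Connected) (hQc : Q.Connected)
    (hR : CGraph.IsModelFeynman I R) (hQ : CGraph.IsModelFeynman I Q)
    (v : R.W) (v' : Q.W) :
    (CGraph.connSum R Q 0 v v').Connected ∧
      CGraph.IsModelFeynman I (CGraph.connSum R Q 0 v v') :=
  ⟨CGraph.connSum_connected hRc hQc (d := 1) (by decide), CGraph.isModelFeynman_connSum hR hQ v v'⟩

/-- Fix a complex matrix model with finite exponent set `I` (a finite
set of positive integers).  If `R` and `Q` are connected Feynman graphs of this model,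
`e = (v, σ₀ v)` a color-0 edge of `R` and `f = (v', τ₀ v')` a color-0 edge of `Q`, then
the connected sum `R #_{e,f} Q` is again a connected Feynman graph of the same model. -/
theorem connSum_isModelFeynman (I : Finset ℕ) (hI : ∀ p ∈ I, 0 < p)
    (R Q : CGraph 3) (hRc : R.Connected) (hQc : Q.Connected)
    (hR : CGraph.IsModelFeynman I R) (hQ : CGraph.IsModelFeynman I Q)
    (v : R.W) (v' : Q.W) :
    (CGraph.connSum R Q 0 v v').Connected ∧
      CGraph.IsModelFeynman I (CGraph.connSum R Q 0 v v') :=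
  connSum_isModelFeynman_general I R Q hRc hQc hR hQ v v'
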